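/- Under M ⊥ R | X, Y, G=1, E[OR(X,Y) | R=1, X=x, G=1] = p(Y=0 | R=1, X=x, G=1) / p(Y=0 | R=0, X=x, G=1), where OR(x,y) = [p(R=0|X=x,Y=y,G=1) p(R=1|X=x,Y=0,G=1)] / [p(R=1|X=x,Y=y,G=1) p(R=0|X=x,Y=0,G=1)]. -/
import Mathlib


open Finset Set Real

noncomputable def Pr {Ω : Type*} [Fintype Ω] (μ : Ω → ℝ) (A : Set Ω) : ℝ :=
  ∑ ω, A.indicator μ ω

noncomputable def cPr {Ω : Type*} [Fintype Ω] (μ : Ω → ℝ) (A B : Set Ω) : ℝ :=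
  Pr μ (A ∩ B) / Pr μ B

noncomputable def cE {Ω : Type*} [Fintype Ω] (μ : Ω → ℝ) (f : Ω → ℝ) (B : Set Ω) : ℝ :=
  (∑ ω, B.indicator (fun ω' => μ ω' * f ω') ω) / Pr μ B

noncomputable def OddsR {Ω 𝓧 : Type*} [Fintype Ω] (μ : Ω → ℝ) (X : Ω → 𝓧) (Y : Ω → ℝ)
    (R G : Ω → ℕ) (x : 𝓧) (y : ℝ) : ℝ :=
  (cPr μ {ω | R ω = 0} {ω | X ω = x ∧ Y ω = y ∧ G ω = 1} *
      cPr μ {ω | R ω = 1} {ω | X ω = x ∧ Y ω = 0 ∧ G ω = 1}) /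
  (cPr μ {ω | R ω = 1} {ω | X ω = x ∧ Y ω = y ∧ G ω = 1} *
      cPr μ {ω | R ω = 0} {ω | X ω = x ∧ Y ω = 0 ∧ G ω = 1})

lemma Pr_filter {Ω : Type*} [Fintype Ω] (μ : Ω → ℝ) (A : Set Ω)
    [DecidablePred (· ∈ A)] :
    Pr μ A = ∑ ω ∈ Finset.univ.filter (· ∈ A), μ ω := by
  rw [Finset.sum_filter]
  exact Finset.sum_congr rfl fun ω _ => by simp [Pr, Set.indicator_apply]

lemma cE_filter {Ω : Type*} [Fintype Ω] (μ f : Ω → ℝ) (A : Set Ω)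
    [DecidablePred (· ∈ A)] :
    cE μ f A = (∑ ω ∈ Finset.univ.filter (· ∈ A), μ ω * f ω) / Pr μ A := by
  unfold cE
  congr 1
  rw [Finset.sum_filter]
  exact Finset.sum_congr rfl fun ω _ => by simp [Set.indicator_apply]

lemma Pr_mono {Ω : Type*} [Fintype Ω] {μ : Ω → ℝ} (hμ0 : ∀ ω, 0 ≤ μ ω)
    {A B : Set Ω} (h : A ⊆ B) : Pr μ A ≤ Pr μ B :=
  Finset.sum_le_sum fun ω _ => Set.indicator_le_indicator_of_subset h hμ0 ω

lemma Pr_congr {Ω : Type*} [Fintype Ω] (μ : Ω → ℝ) {A B : Set Ω}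
    (h : ∀ ω, ω ∈ A ↔ ω ∈ B) : Pr μ A = Pr μ B := by
  rw [Set.ext h]

lemma sum_fiber_group {Ω : Type*} [Fintype Ω] (μ f : Ω → ℝ) (p : Ω → Prop)
    [DecidablePred p] (Y : Ω → ℝ) (F : ℝ → ℝ) (hf : ∀ ω, p ω → f ω = F (Y ω)) :
    ∑ ω ∈ Finset.univ.filter p, μ ω * f ω
      = ∑ y ∈ Finset.univ.image Y,
          (∑ ω ∈ Finset.univ.filter (fun ω => p ω ∧ Y ω = y), μ ω) * F y := by
  classical
  rw [← Finset.sum_fiberwise_of_maps_to (g := Y) (t := Finset.univ.image Y)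
    (fun ω _ => Finset.mem_image_of_mem Y (Finset.mem_univ ω))]
  refine Finset.sum_congr rfl fun y _ => ?_
  rw [Finset.sum_mul]
  refine Finset.sum_congr ?_ fun ω hω => ?_
  · ext ω
    simp only [Finset.mem_filter, Finset.mem_univ, true_and]
  · simp only [Finset.mem_filter, Finset.mem_univ, true_and] at hω
    rw [hf ω hω.1, hω.2]

theorem stmt6
    {Ω 𝓧 𝓜 : Type*} [Fintype Ω]
    (μ : Ω → ℝ) (X : Ω → 𝓧) (M : Ω → 𝓜) (Y : Ω → ℝ) (R G : Ω → ℕ)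
    (hμ0 : ∀ ω, 0 ≤ μ ω) (hμ1 : ∑ ω, μ ω = 1)
    (hR : ∀ ω, R ω = 0 ∨ R ω = 1)
    (h0Y : (0 : ℝ) ∈ Set.range Y)
    (hpos : ∀ x ∈ Set.range X, ∀ m ∈ Set.range M, ∀ y ∈ Set.range Y, ∀ r : ℕ,
      (r = 0 ∨ r = 1) →
      0 < Pr μ {ω | X ω = x ∧ M ω = m ∧ Y ω = y ∧ R ω = r ∧ G ω = 1})
    (hCI : ∀ (m : 𝓜) (r : ℕ) (x : 𝓧) (y : ℝ),
      0 < Pr μ {ω | X ω = x ∧ Y ω = y ∧ G ω = 1} →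
      cPr μ {ω | M ω = m ∧ R ω = r} {ω | X ω = x ∧ Y ω = y ∧ G ω = 1} =
        cPr μ {ω | M ω = m} {ω | X ω = x ∧ Y ω = y ∧ G ω = 1} *
        cPr μ {ω | R ω = r} {ω | X ω = x ∧ Y ω = y ∧ G ω = 1})
 :
    ∀ x ∈ Set.range X,
      cE μ (fun ω => OddsR μ X Y R G (X ω) (Y ω)) {ω | R ω = 1 ∧ X ω = x ∧ G ω = 1} =
        cPr μ {ω | Y ω = 0} {ω | R ω = 1 ∧ X ω = x ∧ G ω = 1} /
          cPr μ {ω | Y ω = 0} {ω | R ω = 0 ∧ X ω = x ∧ G ω = 1} := by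
  classical
  rintro x ⟨ω₀, rfl⟩
  have hx : X ω₀ ∈ Set.range X := ⟨ω₀, rfl⟩
  have hm₀ : M ω₀ ∈ Set.range M := ⟨ω₀, rfl⟩
  set x := X ω₀ with hxdef
  set a : ℕ → ℝ → ℝ :=
    fun r y => Pr μ {ω | X ω = x ∧ Y ω = y ∧ R ω = r ∧ G ω = 1} with ha_def
  set P : ℕ → ℝ := fun r => Pr μ {ω | R ω = r ∧ X ω = x ∧ G ω = 1} with hP_def
  set Q : ℝ → ℝ := fun y => Pr μ {ω | X ω = x ∧ Y ω = y ∧ G ω = 1} with hQ_def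
  -- positivity
  have ha_pos : ∀ y ∈ Set.range Y, ∀ r : ℕ, (r = 0 ∨ r = 1) → 0 < a r y := by
    intro y hy r hr
    refine lt_of_lt_of_le (hpos x hx (M ω₀) hm₀ y hy r hr) (Pr_mono hμ0 ?_)
    intro ω hω; exact ⟨hω.1, hω.2.2⟩
  have hQ_pos : ∀ y ∈ Set.range Y, 0 < Q y := by
    intro y hy
    refine lt_of_lt_of_le (ha_pos y hy 1 (Or.inr rfl)) (Pr_mono hμ0 ?_)
    intro ω hω; exact ⟨hω.1, hω.2.1, hω.2.2.2⟩
  have hP_pos : ∀ r : ℕ, (r = 0 ∨ r = 1) → 0 < P r := by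
    intro r hr
    refine lt_of_lt_of_le (ha_pos 0 h0Y r hr) (Pr_mono hμ0 ?_)
    intro ω hω; exact ⟨hω.2.2.1, hω.1, hω.2.2.2⟩
  have ha00 := (ha_pos 0 h0Y 0 (Or.inl rfl)).ne'
  have ha10 := (ha_pos 0 h0Y 1 (Or.inr rfl)).ne'
  have hP0 := (hP_pos 0 (Or.inl rfl)).ne'
  have hP1 := (hP_pos 1 (Or.inr rfl)).ne'
  -- conditional probabilities
  have hcPr : ∀ (r : ℕ) (y : ℝ),
      cPr μ {ω | R ω = r} {ω | X ω = x ∧ Y ω = y ∧ G ω = 1} = a r y / Q y := by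
    intro r y
    show Pr μ _ / Pr μ _ = Pr μ _ / Pr μ _
    congr 1
    exact Pr_congr μ (by
      intro ω; simp only [Set.mem_inter_iff, Set.mem_setOf_eq]; tauto)
  -- odds ratio formula
  have hOR : ∀ y ∈ Set.range Y,
      OddsR μ X Y R G x y = (a 0 y * a 1 0) / (a 1 y * a 0 0) := by
    intro y hy
    have hQy := (hQ_pos y hy).ne'
    have hQ0 := (hQ_pos 0 h0Y).ne'
    have ha1y := (ha_pos y hy 1 (Or.inr rfl)).ne'
    unfold OddsR
    rw [hcPr, hcPr, hcPr, hcPr]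
    field_simp
    try ring
  -- fiber sums
  have hfiber : ∀ (r : ℕ) (y : ℝ),
      ∑ ω ∈ Finset.univ.filter
        (fun ω => ω ∈ ({ω | R ω = r ∧ X ω = x ∧ G ω = 1} : Set Ω) ∧ Y ω = y), μ ω
        = a r y := by
    intro r y
    show _ = Pr μ {ω | X ω = x ∧ Y ω = y ∧ R ω = r ∧ G ω = 1}
    rw [Pr_filter]
    refine Finset.sum_congr ?_ fun _ _ => rfl
    ext ω
    simp only [Finset.mem_filter, Finset.mem_univ, true_and, Set.mem_setOf_eq]
    tauto
  -- numerator of cE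
  have hnum : (∑ ω ∈ Finset.univ.filter
        (· ∈ ({ω | R ω = 1 ∧ X ω = x ∧ G ω = 1} : Set Ω)),
        μ ω * OddsR μ X Y R G (X ω) (Y ω)) = (a 1 0 / a 0 0) * P 0 := by
    have hp : ∀ ω : Ω, ω ∈ ({ω | R ω = 1 ∧ X ω = x ∧ G ω = 1} : Set Ω) →
        OddsR μ X Y R G (X ω) (Y ω) = OddsR μ X Y R G x (Y ω) := by
      intro ω hω; rw [hω.2.1]
    calc ∑ ω ∈ Finset.univ.filter
          (· ∈ ({ω | R ω = 1 ∧ X ω = x ∧ G ω = 1} : Set Ω)),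
          μ ω * OddsR μ X Y R G (X ω) (Y ω)
        = ∑ y ∈ Finset.univ.image Y,
            (∑ ω ∈ Finset.univ.filter
              (fun ω => (ω ∈ ({ω | R ω = 1 ∧ X ω = x ∧ G ω = 1} : Set Ω)) ∧ Y ω = y), μ ω) *
            OddsR μ X Y R G x y :=
          sum_fiber_group μ _ _ Y (fun y => OddsR μ X Y R G x y) hp
      _ = ∑ y ∈ Finset.univ.image Y, (a 1 0 / a 0 0) * a 0 y := by
          refine Finset.sum_congr rfl fun y hy => ?_
          have hyr : y ∈ Set.range Y := by
            obtain ⟨ω, _, hω⟩ := Finset.mem_image.mp hy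
            exact ⟨ω, hω⟩
          have ha1y := (ha_pos y hyr 1 (Or.inr rfl)).ne'
          rw [hfiber 1 y, hOR y hyr]
          field_simp
      _ = (a 1 0 / a 0 0) * ∑ y ∈ Finset.univ.image Y, a 0 y := by
          rw [Finset.mul_sum]
      _ = (a 1 0 / a 0 0) * P 0 := by
          congr 1
          have hgrp := sum_fiber_group μ (fun _ => 1)
            (fun ω => ω ∈ ({ω | R ω = 0 ∧ X ω = x ∧ G ω = 1} : Set Ω)) Y (fun _ => 1)
            (fun _ _ => rfl)
          simp only [mul_one] at hgrp
          calc ∑ y ∈ Finset.univ.image Y, a 0 y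
              = ∑ y ∈ Finset.univ.image Y, ∑ ω ∈ Finset.univ.filter
                  (fun ω => ω ∈ ({ω | R ω = 0 ∧ X ω = x ∧ G ω = 1} : Set Ω) ∧ Y ω = y),
                  μ ω := Finset.sum_congr rfl fun y _ => (hfiber 0 y).symm
            _ = ∑ ω ∈ Finset.univ.filter
                  (· ∈ ({ω | R ω = 0 ∧ X ω = x ∧ G ω = 1} : Set Ω)), μ ω := hgrp.symm
            _ = P 0 := (Pr_filter μ _).symm
  -- conclude
  rw [cE_filter, hnum]
  have hrhs1 : cPr μ {ω | Y ω = 0} {ω | R ω = 1 ∧ X ω = x ∧ G ω = 1} = a 1 0 / P 1 := by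
    show Pr μ _ / Pr μ _ = Pr μ _ / Pr μ _
    congr 1
    exact Pr_congr μ (by
      intro ω; simp only [Set.mem_inter_iff, Set.mem_setOf_eq]; tauto)
  have hrhs0 : cPr μ {ω | Y ω = 0} {ω | R ω = 0 ∧ X ω = x ∧ G ω = 1} = a 0 0 / P 0 := by
    show Pr μ _ / Pr μ _ = Pr μ _ / Pr μ _
    congr 1
    exact Pr_congr μ (by
      intro ω; simp only [Set.mem_inter_iff, Set.mem_setOf_eq]; tauto)
  have hPr1 : Pr μ {ω | R ω = 1 ∧ X ω = x ∧ G ω = 1} = P 1 := rfl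
  rw [hrhs1, hrhs0, hPr1]
  field_simp
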